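/- arXiv:0902.1435 — 2 statements merged into one kernel-verified Lean document; each statement's English description precedes it below -/
import Mathlib

section
/- Let X be a t-diagram with more than four points (d ≥ 1). If A_i is a black point and B is the white point lying in the boundary triangle A_{i-1}A_iA_{i+1}, then X \ {A_i, B} is again a t-diagram (with parameter d − 1). -/
/-- A t-diagram with parameter `d`: `d+3` black points in convex position in the plane
(in the cyclic order given by the indices), `d+1` white points inside their convex hull,
all points in general position, and every triangle with black vertices containing
exactly one white point in its interior. -/
structure TDiagram (d : ℕ) where
  black : Fin (d + 3) → ℝ × ℝ
  white : Fin (d + 1) → ℝ × ℝ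
  inj : Function.Injective (Sum.elim black white : Fin (d + 3) ⊕ Fin (d + 1) → ℝ × ℝ)
  genPos : ∀ x y z : Fin (d + 3) ⊕ Fin (d + 1), x ≠ y → x ≠ z → y ≠ z →
    ¬ Collinear ℝ {Sum.elim black white x, Sum.elim black white y, Sum.elim black white z}
  edgeOrder : ∀ i : Fin (d + 3), ∃ f : (ℝ × ℝ) →ₗ[ℝ] ℝ, ∃ c : ℝ,
    f (black i) = c ∧ f (black (i + 1)) = c ∧
    ∀ j : Fin (d + 3), j ≠ i → j ≠ i + 1 → f (black j) < c
  whiteInside : ∀ w : Fin (d + 1), white w ∈ convexHull ℝ (Set.range black)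
  onePerTriangle : ∀ i j k : Fin (d + 3), i ≠ j → i ≠ k → j ≠ k →
    ∃! w : Fin (d + 1), white w ∈ interior (convexHull ℝ {black i, black j, black k})

/-- The (open) boundary triangle `A_{i-1} A_i A_{i+1}` of the black vertex `A_i`. -/
def TDiagram.bTri {d : ℕ} (X : TDiagram d) (i : Fin (d + 3)) : Set (ℝ × ℝ) :=
  interior (convexHull ℝ {X.black (i - 1), X.black i, X.black (i + 1)})

/-!
Let `λ₀, λ₁, λ₂` be the barycentric coordinates with respect to the ear triangle
`A_{i-1} A_i A_{i+1}`. The supporting lines of the edges `A_{i-1} A_i` and `A_i A_{i+1}` show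
that `λ₂ ≥ 0` and `λ₀ ≥ 0` on the convex hull of the black points, and the supporting line of an
edge `A_k A_{k+1}` shows that `λ₁ < 0` at every other black point `A_k`. Hence the chord
`A_{i-1} A_{i+1}` is an edge of the polygon without `A_i`, and the hull of the remaining black
points is the part of the old hull where `λ₁ ≤ 0`. A white point other than `B` has `λ₁ < 0`,
since otherwise general position would put it in the open ear next to `B`. So it stays inside the
new hull, and no triangle of remaining black points can contain `B`, which has `λ₁ > 0`.
-/

open Set Module

section Geometry

variable {E : Type*} [AddCommGroup E] [Module ℝ E]

theorem AffineBasis.apply_eq_sum_coord_mul {ι : Type*} [Fintype ι] (b : AffineBasis ι ℝ E)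
    (f : E →ₗ[ℝ] ℝ) (x : E) : f x = ∑ j, b.coord j x * f (b j) := by
  conv_lhs => rw [← b.linear_combination_coord_eq_self x]
  simp only [map_sum, map_smul, smul_eq_mul]

theorem AffineBasis.sub_eq_coord_mul_of_apply_eq (b : AffineBasis (Fin 3) ℝ E) (f : E →ₗ[ℝ] ℝ)
    {c : ℝ} {m : Fin 3} (h₁ : f (b (m + 1)) = c) (h₂ : f (b (m + 2)) = c) (x : E) :
    f x - c = b.coord m x * (f (b m) - c) := by
  have hf := b.apply_eq_sum_coord_mul f x
  have h1 := b.sum_coord_apply_eq_one x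
  rw [Fin.sum_univ_three] at hf h1
  fin_cases m <;>
    simp only [Fin.zero_eta, Fin.mk_one, Fin.reduceFinMk, zero_add, Fin.reduceAdd] at h₁ h₂ ⊢ <;>
    rw [h₁, h₂] at hf <;> linear_combination hf + c * h1

theorem AffineBasis.coord_pos_of_apply_lt (b : AffineBasis (Fin 3) ℝ E) (f : E →ₗ[ℝ] ℝ)
    {c : ℝ} {m : Fin 3} (h₁ : f (b (m + 1)) = c) (h₂ : f (b (m + 2)) = c) (hm : f (b m) < c)
    {x : E} (hx : f x < c) : 0 < b.coord m x := by
  have := b.sub_eq_coord_mul_of_apply_eq f h₁ h₂ x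
  nlinarith

theorem AffineBasis.coord_ne_zero_of_not_collinear (b : AffineBasis (Fin 3) ℝ E) (m : Fin 3)
    {x : E} (h : ¬ Collinear ℝ {x, b (m + 1), b (m + 2)}) : b.coord m x ≠ 0 := by
  intro h0
  refine h (collinear_insert_of_mem_affineSpan_pair ?_)
  have hx := b.linear_combination_coord_eq_self x
  have h1 := b.sum_coord_apply_eq_one x
  rw [Fin.sum_univ_three] at hx h1
  convert AffineMap.lineMap_mem_affineSpan_pair (b.coord (m + 2) x) (b (m + 1)) (b (m + 2))
  rw [AffineMap.lineMap_apply_module]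
  conv_lhs => rw [← hx]
  fin_cases m <;> simp only [Fin.zero_eta, Fin.mk_one, Fin.reduceFinMk, Fin.reduceAdd] at h0 ⊢
  · linear_combination (norm := module) h0 • (b 0 - b 1) + h1 • b 1
  · linear_combination (norm := module) h0 • (b 1 - b 2) + h1 • b 2
  · linear_combination (norm := module) h0 • (b 2 - b 0) + h1 • b 0

-- The segment from `a` to `x` crosses the level `φ = 0` at a point `z ∈ conv s`, and `x` lies
-- between `z` and a point `y ∈ conv s`.
theorem mem_convexHull_of_mem_convexHull_insert {a x : E} {s : Set E} {φ : E →ᵃ[ℝ] ℝ}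
    (hs : ∀ y ∈ convexHull ℝ s, φ y ≤ 0) (ha : 0 < φ a)
    (hlevel : ∀ z ∈ convexHull ℝ (insert a s), φ z = 0 → z ∈ convexHull ℝ s)
    (hx : x ∈ convexHull ℝ (insert a s)) (hφx : φ x < 0) : x ∈ convexHull ℝ s := by
  rcases s.eq_empty_or_nonempty with rfl | hne
  · simp only [insert_empty_eq, convexHull_singleton, mem_singleton_iff] at hx
    subst hx; linarith
  obtain ⟨y, hy, hxy⟩ : ∃ y ∈ convexHull ℝ s, x ∈ segment ℝ a y := by
    simpa [convexHull_insert hne, mem_convexJoin] using hx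
  obtain ⟨z, hz, hφz⟩ : (0 : ℝ) ∈ φ '' segment ℝ a x := by
    rw [image_segment, segment_symm, segment_eq_Icc (hφx.trans ha).le]
    exact ⟨hφx.le, ha.le⟩
  have hzs : z ∈ convexHull ℝ s := hlevel z
    ((convex_convexHull ℝ _).segment_subset (subset_convexHull ℝ _ (mem_insert a s)) hx hz) hφz
  have hzxy : x ∈ segment ℝ z y := by
    rw [mem_segment_iff_wbtw] at hxy hz ⊢
    exact hxy.trans_left_right hz
  exact (convex_convexHull ℝ s).segment_subset hzs hy hzxy

def triangleBasis [FiniteDimensional ℝ E] (hE : finrank ℝ E = 2) {p q r : E}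
    (h : ¬ Collinear ℝ {p, q, r}) : AffineBasis (Fin 3) ℝ E :=
  ⟨![p, q, r], affineIndependent_iff_not_collinear_set.2 h,
    (affineIndependent_iff_not_collinear_set.2 h).affineSpan_eq_top_iff_card_eq_finrank_add_one.2
      (by simp [hE])⟩

@[simp]
theorem coe_triangleBasis [FiniteDimensional ℝ E] (hE : finrank ℝ E = 2) {p q r : E}
    (h : ¬ Collinear ℝ {p, q, r}) : ⇑(triangleBasis hE h) = ![p, q, r] :=
  rfl

theorem range_triangleBasis [FiniteDimensional ℝ E] (hE : finrank ℝ E = 2) {p q r : E}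
    (h : ¬ Collinear ℝ {p, q, r}) : range (triangleBasis hE h) = {p, q, r} := by
  ext
  simp [Matrix.range_cons, or_comm, or_left_comm]

end Geometry

theorem Function.Injective.range_comp_eq_diff {α β γ : Type*} {f : α → β} (hf : Injective f)
    {g : γ → α} {a : α} (hg : range g = {a}ᶜ) : range (f ∘ g) = range f \ {f a} := by
  rw [range_comp, hg, compl_eq_univ_sdiff, image_sdiff hf, image_univ, image_singleton]

namespace Fin

variable {n : ℕ}

theorem sub_one_ne_self (i : Fin (n + 2)) : i - 1 ≠ i := by
  simp [sub_eq_self]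

theorem self_ne_add_one (i : Fin (n + 2)) : i ≠ i + 1 := by
  simp

theorem sub_one_ne_add_one (i : Fin (n + 3)) : i - 1 ≠ i + 1 := by
  rw [Ne, sub_eq_iff_eq_add, add_assoc, left_eq_add]
  simp [Fin.ext_iff, Fin.val_add, Nat.mod_eq_of_lt (show 2 < n + 3 by omega)]

theorem existsUnique_succAbove {P : Fin (n + 1) → Prop} {w : Fin (n + 1)} (h : ∃! m, P m)
    (hw : ¬ P w) : ∃! u, P (w.succAbove u) := by
  obtain ⟨m, hm, huniq⟩ := h
  obtain ⟨u, rfl⟩ := exists_succAbove_eq fun h : m = w => hw (h ▸ hm)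
  exact ⟨u, hm, fun v hv => succAbove_right_injective (huniq _ hv)⟩

-- Enumerates the indices other than `i` in cyclic order, starting at `i + 1`.
def cyclicSuccAbove (i : Fin (n + 2)) (j : Fin (n + 1)) : Fin (n + 2) := i + j.succ

variable (i : Fin (n + 2))

theorem cyclicSuccAbove_injective : Function.Injective i.cyclicSuccAbove :=
  (add_right_injective i).comp (succ_injective _)

theorem cyclicSuccAbove_ne (j : Fin (n + 1)) : i.cyclicSuccAbove j ≠ i := by
  simp [cyclicSuccAbove, succ_ne_zero]

theorem range_cyclicSuccAbove : range i.cyclicSuccAbove = {i}ᶜ := by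
  refine Subset.antisymm (range_subset_iff.2 (cyclicSuccAbove_ne i)) fun k hk => ?_
  refine ⟨(k - i).pred (sub_ne_zero.2 hk), ?_⟩
  simp [cyclicSuccAbove]

theorem cyclicSuccAbove_zero : i.cyclicSuccAbove 0 = i + 1 := by
  simp [cyclicSuccAbove]

theorem cyclicSuccAbove_last : i.cyclicSuccAbove (last n) = i - 1 := by
  rw [cyclicSuccAbove, succ_last, eq_neg_of_add_eq_zero_left (last_add_one _), sub_eq_add_neg]

theorem cyclicSuccAbove_add_one {j : Fin (n + 1)} (hj : j ≠ last n) :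
    i.cyclicSuccAbove (j + 1) = i.cyclicSuccAbove j + 1 := by
  have hsucc : (j + 1).succ = j.succ + 1 := by
    ext
    simp [val_add_one, hj]
  simp only [cyclicSuccAbove, hsucc, add_assoc]

end Fin

namespace TDiagram

variable {d : ℕ} (X : TDiagram d)

theorem black_injective : Function.Injective X.black :=
  X.inj.comp Sum.inl_injective

theorem white_injective : Function.Injective X.white :=
  X.inj.comp Sum.inr_injective

theorem not_collinear_black {a b c : Fin (d + 3)} (hab : a ≠ b) (hac : a ≠ c) (hbc : b ≠ c) :
    ¬ Collinear ℝ {X.black a, X.black b, X.black c} := by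
  simpa using X.genPos (.inl a) (.inl b) (.inl c) (by simpa) (by simpa) (by simpa)

theorem not_collinear_white_black (u : Fin (d + 1)) {a b : Fin (d + 3)} (hab : a ≠ b) :
    ¬ Collinear ℝ {X.white u, X.black a, X.black b} := by
  simpa using X.genPos (.inr u) (.inl a) (.inl b) (by simp) (by simp) (by simpa)

def ear (i : Fin (d + 3)) : AffineBasis (Fin 3) ℝ (ℝ × ℝ) :=
  triangleBasis (by simp) (X.not_collinear_black (Fin.sub_one_ne_self i)
    (Fin.sub_one_ne_add_one i) (Fin.self_ne_add_one i))

section Ear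

variable (i : Fin (d + 3))

@[simp] theorem ear_zero : X.ear i 0 = X.black (i - 1) := rfl
@[simp] theorem ear_one : X.ear i 1 = X.black i := rfl
@[simp] theorem ear_two : X.ear i 2 = X.black (i + 1) := rfl

theorem bTri_eq : X.bTri i = {x | ∀ m, 0 < (X.ear i).coord m x} := by
  rw [← AffineBasis.interior_convexHull, ear, range_triangleBasis, bTri]

theorem coord_two_black_pos {k : Fin (d + 3)} (h₁ : k ≠ i - 1) (h₂ : k ≠ i) :
    0 < (X.ear i).coord 2 (X.black k) := by
  obtain ⟨f, c, hf₀, hf₁, hlt⟩ := X.edgeOrder (i - 1)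
  rw [sub_add_cancel] at hf₁ hlt
  refine (X.ear i).coord_pos_of_apply_lt f (m := 2) (by simpa) (by simpa) ?_ (hlt k h₁ h₂)
  simpa using hlt (i + 1) (Fin.sub_one_ne_add_one i).symm (Fin.self_ne_add_one i).symm

theorem coord_zero_black_pos {k : Fin (d + 3)} (h₁ : k ≠ i) (h₂ : k ≠ i + 1) :
    0 < (X.ear i).coord 0 (X.black k) := by
  obtain ⟨f, c, hf₀, hf₁, hlt⟩ := X.edgeOrder i
  refine (X.ear i).coord_pos_of_apply_lt f (m := 0) (by simpa) (by simpa) ?_ (hlt k h₁ h₂)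
  simpa using hlt (i - 1) (Fin.sub_one_ne_self i) (Fin.sub_one_ne_add_one i)

theorem coord_one_black_neg {k : Fin (d + 3)} (h₁ : k ≠ i - 1) (h₂ : k ≠ i) (h₃ : k ≠ i + 1) :
    (X.ear i).coord 1 (X.black k) < 0 := by
  obtain ⟨f, c, hk, hk₁, hlt⟩ := X.edgeOrder k
  have hp : f (X.black (i - 1)) ≤ c := by
    by_cases h : i - 1 = k + 1
    · rw [h, hk₁]
    · exact (hlt _ (Ne.symm h₁) h).le
  have hq : f (X.black i) < c := hlt i (Ne.symm h₂) fun h => h₁ (eq_sub_of_add_eq h.symm)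
  have hr : f (X.black (i + 1)) < c := hlt _ (Ne.symm h₃) fun h => h₂ (add_right_cancel h).symm
  have hsum := (X.ear i).apply_eq_sum_coord_mul f (X.black k)
  have h1 := (X.ear i).sum_coord_apply_eq_one (X.black k)
  rw [Fin.sum_univ_three] at hsum h1
  simp only [ear_zero, ear_one, ear_two, hk] at hsum
  have hpos₀ := X.coord_zero_black_pos i h₂ h₃
  have hpos₂ := X.coord_two_black_pos i h₁ h₂
  have hc : c * ((X.ear i).coord 0 (X.black k) + (X.ear i).coord 1 (X.black k) +
      (X.ear i).coord 2 (X.black k)) = c := by rw [h1, mul_one]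
  by_contra! hneg
  nlinarith [mul_pos hpos₂ (sub_pos.2 hr), mul_nonneg hpos₀.le (sub_nonneg.2 hp),
    mul_nonneg hneg (sub_nonneg.2 hq.le)]

theorem coord_black_nonneg {m : Fin 3} (hm : m ≠ 1) (k : Fin (d + 3)) :
    0 ≤ (X.ear i).coord m (X.black k) := by
  fin_cases m
  · rcases eq_or_ne k i with rfl | h₁
    · rw [← ear_one, AffineBasis.coord_apply_ne _ (by decide)]
    rcases eq_or_ne k (i + 1) with rfl | h₂
    · rw [← ear_two, AffineBasis.coord_apply_ne _ (by decide)]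
    exact (X.coord_zero_black_pos i h₁ h₂).le
  · exact absurd rfl hm
  · rcases eq_or_ne k (i - 1) with rfl | h₁
    · rw [← ear_zero, AffineBasis.coord_apply_ne _ (by decide)]
    rcases eq_or_ne k i with rfl | h₂
    · rw [← ear_one, AffineBasis.coord_apply_ne _ (by decide)]
    exact (X.coord_two_black_pos i h₁ h₂).le

theorem coord_one_black_nonpos {k : Fin (d + 3)} (hk : k ≠ i) :
    (X.ear i).coord 1 (X.black k) ≤ 0 := by
  rcases eq_or_ne k (i - 1) with rfl | h₁
  · rw [← ear_zero, AffineBasis.coord_apply_ne _ (by decide)]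
  rcases eq_or_ne k (i + 1) with rfl | h₃
  · rw [← ear_two, AffineBasis.coord_apply_ne _ (by decide)]
  exact (X.coord_one_black_neg i h₁ hk h₃).le

theorem coord_nonneg_of_mem_convexHull {m : Fin 3} (hm : m ≠ 1) {x : ℝ × ℝ}
    (hx : x ∈ convexHull ℝ (range X.black)) : 0 ≤ (X.ear i).coord m x :=
  show x ∈ (X.ear i).coord m ⁻¹' Ici 0 from
    convexHull_min (by rintro _ ⟨k, rfl⟩; exact X.coord_black_nonneg i hm k)
      ((convex_Ici 0).affine_preimage _) hx

theorem coord_one_nonpos_of_mem_convexHull {x : ℝ × ℝ}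
    (hx : x ∈ convexHull ℝ (range X.black \ {X.black i})) : (X.ear i).coord 1 x ≤ 0 := by
  refine show x ∈ (X.ear i).coord 1 ⁻¹' Iic 0 from
    convexHull_min ?_ ((convex_Iic 0).affine_preimage _) hx
  rintro _ ⟨⟨k, rfl⟩, hk⟩
  exact X.coord_one_black_nonpos i fun h => hk (h ▸ rfl)

theorem mem_convexHull_of_coord_one_eq_zero {x : ℝ × ℝ}
    (hx : x ∈ convexHull ℝ (range X.black)) (h0 : (X.ear i).coord 1 x = 0) :
    x ∈ convexHull ℝ (range X.black \ {X.black i}) := by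
  have hsum := (X.ear i).sum_coord_apply_eq_one x
  have hcomb := (X.ear i).linear_combination_coord_eq_self x
  rw [Fin.sum_univ_three, h0] at hsum
  rw [Fin.sum_univ_three, h0, zero_smul, add_zero] at hcomb
  have hp : X.black (i - 1) ∈ range X.black \ {X.black i} :=
    ⟨mem_range_self _, X.black_injective.ne (Fin.sub_one_ne_self i)⟩
  have hr : X.black (i + 1) ∈ range X.black \ {X.black i} :=
    ⟨mem_range_self _, X.black_injective.ne (Fin.self_ne_add_one i).symm⟩
  exact segment_subset_convexHull hp hr ⟨_, _, X.coord_nonneg_of_mem_convexHull i (by decide) hx,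
      X.coord_nonneg_of_mem_convexHull i (by decide) hx, by linarith, hcomb⟩

theorem coord_white_ne_zero (u : Fin (d + 1)) (m : Fin 3) : (X.ear i).coord m (X.white u) ≠ 0 := by
  fin_cases m
  · exact (X.ear i).coord_ne_zero_of_not_collinear 0
      (X.not_collinear_white_black u (Fin.self_ne_add_one i))
  · exact (X.ear i).coord_ne_zero_of_not_collinear 1
      (X.not_collinear_white_black u (Fin.sub_one_ne_add_one i).symm)
  · exact (X.ear i).coord_ne_zero_of_not_collinear 2
      (X.not_collinear_white_black u (Fin.sub_one_ne_self i))

theorem exists_chord :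
    ∃ f : (ℝ × ℝ) →ₗ[ℝ] ℝ, ∃ c : ℝ, f (X.black (i - 1)) = c ∧ f (X.black (i + 1)) = c ∧
      ∀ k, k ≠ i - 1 → k ≠ i → k ≠ i + 1 → f (X.black k) < c := by
  refine ⟨((X.ear i).coord 1).linear, -(X.ear i).coord 1 0, ?_, ?_, fun k h₁ h₂ h₃ => ?_⟩ <;>
    simp only [AffineMap.decomp', Pi.sub_apply]
  · rw [← ear_zero, AffineBasis.coord_apply_ne _ (by decide), zero_sub]
  · rw [← ear_two, AffineBasis.coord_apply_ne _ (by decide), zero_sub]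
  · linarith [X.coord_one_black_neg i h₁ h₂ h₃]

end Ear

section White

variable {i : Fin (d + 3)} {w : Fin (d + 1)}

theorem coord_one_white_neg (hw : X.white w ∈ X.bTri i) {u : Fin (d + 1)} (hu : u ≠ w) :
    (X.ear i).coord 1 (X.white u) < 0 := by
  refine (X.coord_white_ne_zero i u 1).lt_of_le (not_lt.1 fun hpos => hu ?_)
  have hu_ear : X.white u ∈ X.bTri i := by
    rw [bTri_eq]
    intro m
    fin_cases m
    · exact (X.coord_white_ne_zero i u 0).symm.lt_of_le
        (X.coord_nonneg_of_mem_convexHull i (by decide) (X.whiteInside u))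
    · exact hpos
    · exact (X.coord_white_ne_zero i u 2).symm.lt_of_le
        (X.coord_nonneg_of_mem_convexHull i (by decide) (X.whiteInside u))
  exact (X.onePerTriangle _ _ _ (Fin.sub_one_ne_self i) (Fin.sub_one_ne_add_one i)
    (Fin.self_ne_add_one i)).unique hu_ear hw

theorem white_mem_convexHull_diff (hw : X.white w ∈ X.bTri i) {u : Fin (d + 1)} (hu : u ≠ w) :
    X.white u ∈ convexHull ℝ (range X.black \ {X.black i}) := by
  have hins : insert (X.black i) (range X.black \ {X.black i}) = range X.black := by
    rw [insert_sdiff_singleton, insert_eq_of_mem (mem_range_self i)]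
  refine mem_convexHull_of_mem_convexHull_insert (a := X.black i) (φ := (X.ear i).coord 1)
    (fun y hy => X.coord_one_nonpos_of_mem_convexHull i hy) ?_ ?_ ?_ (X.coord_one_white_neg hw hu)
  · rw [← ear_one, AffineBasis.coord_apply_eq]
    exact one_pos
  · rw [hins]
    exact fun z hz => X.mem_convexHull_of_coord_one_eq_zero i hz
  · rw [hins]
    exact X.whiteInside u

theorem white_notMem_interior_convexHull (hw : X.white w ∈ X.bTri i) {a b c : Fin (d + 3)}
    (ha : a ≠ i) (hb : b ≠ i) (hc : c ≠ i) :
    X.white w ∉ interior (convexHull ℝ {X.black a, X.black b, X.black c}) := by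
  intro hmem
  have hsub : {X.black a, X.black b, X.black c} ⊆ range X.black \ {X.black i} := by
    simp [insert_subset_iff, X.black_injective.ne, ha, hb, hc]
  have hneg := X.coord_one_nonpos_of_mem_convexHull i (convexHull_mono hsub (interior_subset hmem))
  rw [bTri_eq] at hw
  linarith [hw 1]

end White

theorem edgeOrder_cyclicSuccAbove (i : Fin (d + 3)) (j : Fin (d + 2)) :
    ∃ f : (ℝ × ℝ) →ₗ[ℝ] ℝ, ∃ c : ℝ, f (X.black (i.cyclicSuccAbove j)) = c ∧
      f (X.black (i.cyclicSuccAbove (j + 1))) = c ∧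
      ∀ k, k ≠ j → k ≠ j + 1 → f (X.black (i.cyclicSuccAbove k)) < c := by
  have hg := Fin.cyclicSuccAbove_injective i
  rcases eq_or_ne j (Fin.last _) with rfl | hj
  · obtain ⟨f, c, h₁, h₂, hlt⟩ := X.exists_chord i
    rw [Fin.last_add_one, Fin.cyclicSuccAbove_last, Fin.cyclicSuccAbove_zero]
    refine ⟨f, c, h₁, h₂, fun k hk₁ hk₂ => hlt _ ?_ (Fin.cyclicSuccAbove_ne i k) ?_⟩
    · rw [← Fin.cyclicSuccAbove_last]
      exact hg.ne hk₁
    · rw [← Fin.cyclicSuccAbove_zero]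
      exact hg.ne hk₂
  · obtain ⟨f, c, h₁, h₂, hlt⟩ := X.edgeOrder (i.cyclicSuccAbove j)
    rw [← Fin.cyclicSuccAbove_add_one i hj] at h₂ hlt
    exact ⟨f, c, h₁, h₂, fun k hk₁ hk₂ => hlt _ (hg.ne hk₁) (hg.ne hk₂)⟩

def removeEar {e : ℕ} (X : TDiagram (e + 1)) {i : Fin (e + 1 + 3)} {w : Fin (e + 1 + 1)}
    (hw : X.white w ∈ X.bTri i) : TDiagram e where
  black := X.black ∘ i.cyclicSuccAbove
  white := X.white ∘ w.succAbove
  inj := by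
    rw [← Sum.elim_comp_map]
    exact X.inj.comp ((Fin.cyclicSuccAbove_injective i).sumMap Fin.succAbove_right_injective)
  genPos x y z hxy hxz hyz := by
    have hmap := (Fin.cyclicSuccAbove_injective i).sumMap (Fin.succAbove_right_injective (p := w))
    rw [← Sum.elim_comp_map]
    exact X.genPos _ _ _ (hmap.ne hxy) (hmap.ne hxz) (hmap.ne hyz)
  edgeOrder := X.edgeOrder_cyclicSuccAbove i
  whiteInside u := by
    rw [X.black_injective.range_comp_eq_diff (Fin.range_cyclicSuccAbove i)]
    exact X.white_mem_convexHull_diff hw (Fin.succAbove_ne w u)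
  onePerTriangle j₁ j₂ j₃ h₁₂ h₁₃ h₂₃ := by
    have hg := Fin.cyclicSuccAbove_injective i
    exact Fin.existsUnique_succAbove (X.onePerTriangle _ _ _ (hg.ne h₁₂) (hg.ne h₁₃) (hg.ne h₂₃))
      (X.white_notMem_interior_convexHull hw (Fin.cyclicSuccAbove_ne i j₁)
        (Fin.cyclicSuccAbove_ne i j₂) (Fin.cyclicSuccAbove_ne i j₃))

end TDiagram

/-- Lemma 3.4 (induction lemma for t-diagrams): if `X` is a t-diagram with parameter
`e + 1` (more than four points), `A_i` is a black point and `B` the white point lying in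
its boundary triangle, then removing `A_i` and `B` yields again a t-diagram. -/
theorem stmt7 (e : ℕ) (X : TDiagram (e + 1)) (i : Fin (e + 1 + 3)) (w : Fin (e + 1 + 1))
    (hw : X.white w ∈ X.bTri i) :
    ∃ Y : TDiagram e,
      Set.range Y.black = Set.range X.black \ {X.black i} ∧
      Set.range Y.white = Set.range X.white \ {X.white w} :=
  ⟨X.removeEar hw, X.black_injective.range_comp_eq_diff (Fin.range_cyclicSuccAbove i),
    X.white_injective.range_comp_eq_diff (Fin.range_succAbove w)⟩
end

section
/- If a white point B of a t-diagram lies inside the boundary triangle A_{i-1}A_iA_{i+1} (corresponds to A_i), then B lies inside a triangle with black vertices only if one of that triangle's vertices is A_i. -/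
/-! In barycentric coordinates with respect to the boundary triangle `A_{i-1} A_i A_{i+1}`, the
white point has positive `A_i`-coordinate. Convex position makes the `A_i`-coordinate of every
other black vertex `A_j` nonpositive: the supporting lines of the edges `A_{i-1} A_i` and
`A_i A_{i+1}` make its other two coordinates positive, and then the supporting line of the edge
`A_j A_{j+1}` rules out a nonnegative `A_i`-coordinate. Hence every triangle on black vertices
other than `A_i` lies in the closed half-plane where that coordinate is nonpositive. -/

section AffineBasis

variable {ι k V P : Type*} [Fintype ι] [Field k] [LinearOrder k] [IsStrictOrderedRing k]
  [AddCommGroup V] [Module k V] [AddTorsor V P]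

omit [LinearOrder k] [IsStrictOrderedRing k] in
theorem AffineBasis.affineMap_sub_eq_sum (b : AffineBasis ι k P) (f : P →ᵃ[k] k) (c : k)
    (x : P) : f x - c = ∑ j, b.coord j x * (f (b j) - c) := by
  classical
  conv_lhs => rw [← b.affineCombination_coord_eq_self x]
  rw [Finset.map_affineCombination _ _ _ (b.sum_coord_apply_eq_one x),
    Finset.affineCombination_eq_linear_combination _ _ _ (b.sum_coord_apply_eq_one x)]
  simp only [Function.comp_apply, smul_eq_mul, mul_sub, Finset.sum_sub_distrib,
    ← Finset.sum_mul, b.sum_coord_apply_eq_one, one_mul]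

theorem AffineBasis.coord_pos_of_apply_lt_s8 (b : AffineBasis ι k P) (f : P →ᵃ[k] k) {c : k}
    {x : P} (j : ι) (hf : ∀ m, m ≠ j → f (b m) = c) (hj : f (b j) < c) (hx : f x < c) :
    0 < b.coord j x := by
  have h := b.affineMap_sub_eq_sum f c x
  rw [Finset.sum_eq_single j (fun m _ hm => by rw [hf m hm, sub_self, mul_zero])
    (by simp)] at h
  exact pos_of_mul_neg_left (h ▸ sub_neg.2 hx) (sub_nonpos.2 hj.le)

theorem AffineBasis.apply_lt_of_coord_nonneg (b : AffineBasis ι k P) (f : P →ᵃ[k] k) {c : k}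
    {x : P} (hf : ∀ m, f (b m) ≤ c) (hx : ∀ m, 0 ≤ b.coord m x) (j : ι) (hj : f (b j) < c)
    (hxj : 0 < b.coord j x) : f x < c := by
  rw [← sub_neg, b.affineMap_sub_eq_sum f c x, ← Finset.sum_const_zero]
  exact Finset.sum_lt_sum
    (fun m _ => mul_nonpos_of_nonneg_of_nonpos (hx m) (sub_nonpos.2 (hf m)))
    ⟨j, Finset.mem_univ j, mul_neg_of_pos_of_neg hxj (sub_neg.2 hj)⟩

end AffineBasis

theorem Fin.sub_one_ne_add_one_s8 {n : ℕ} (i : Fin (n + 3)) : i - 1 ≠ i + 1 := by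
  rw [Ne, sub_eq_iff_eq_add, add_assoc, left_eq_add]
  intro h
  have := congrArg Fin.val h
  rw [Fin.val_add, Fin.val_one, Fin.val_zero, Nat.mod_eq_of_lt (by omega)] at this
  omega

namespace TDiagram

variable {d : ℕ} (X : TDiagram d)

theorem black_not_collinear {p q r : Fin (d + 3)} (hpq : p ≠ q) (hpr : p ≠ r) (hqr : q ≠ r) :
    ¬ Collinear ℝ {X.black p, X.black q, X.black r} := by
  simpa using X.genPos (.inl p) (.inl q) (.inl r) (by simpa) (by simpa) (by simpa)

theorem affineIndependent_boundary (i : Fin (d + 3)) :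
    AffineIndependent ℝ ![X.black (i - 1), X.black i, X.black (i + 1)] :=
  affineIndependent_iff_not_collinear_set.2 <|
    X.black_not_collinear (by simp) (Fin.sub_one_ne_add_one_s8 i) (by simp)

def boundaryBasis (i : Fin (d + 3)) : AffineBasis (Fin 3) ℝ (ℝ × ℝ) :=
  ⟨_, X.affineIndependent_boundary i, by
    rw [(X.affineIndependent_boundary i).affineSpan_eq_top_iff_card_eq_finrank_add_one]
    simp⟩

theorem bTri_eq_setOf_coord_pos (i : Fin (d + 3)) :
    X.bTri i = {x | ∀ m, 0 < (X.boundaryBasis i).coord m x} := by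
  rw [bTri, ← (X.boundaryBasis i).interior_convexHull]
  congr 2
  change _ = Set.range ![_, _, _]
  simp [Matrix.range_cons, Matrix.range_empty, Set.insert_comm, Set.pair_comm]

variable {i j : Fin (d + 3)}

theorem coord_zero_boundaryBasis_pos (hji : j ≠ i) (hji' : j ≠ i + 1) :
    0 < (X.boundaryBasis i).coord 0 (X.black j) := by
  obtain ⟨f, c, hfi, hfi', hlt⟩ := X.edgeOrder i
  refine (X.boundaryBasis i).coord_pos_of_apply_lt_s8 f.toAffineMap 0 ?_
    (hlt _ (by simp) (Fin.sub_one_ne_add_one_s8 i)) (hlt j hji hji')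
  intro m hm
  fin_cases m
  exacts [absurd rfl hm, hfi, hfi']

theorem coord_two_boundaryBasis_pos (hji : j ≠ i - 1) (hji' : j ≠ i) :
    0 < (X.boundaryBasis i).coord 2 (X.black j) := by
  obtain ⟨f, c, hfi, hfi', hlt⟩ := X.edgeOrder (i - 1)
  rw [sub_add_cancel] at hfi' hlt
  refine (X.boundaryBasis i).coord_pos_of_apply_lt_s8 f.toAffineMap 2 ?_
    (hlt _ (Fin.sub_one_ne_add_one_s8 i).symm (by simp)) (hlt j hji hji')
  intro m hm
  fin_cases m
  exacts [hfi, hfi', absurd rfl hm]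

theorem coord_one_boundaryBasis_neg (hji : j ≠ i - 1) (hji' : j ≠ i) (hji'' : j ≠ i + 1) :
    (X.boundaryBasis i).coord 1 (X.black j) < 0 := by
  by_contra! hnonneg
  obtain ⟨f, c, hfj, hfj', hlt⟩ := X.edgeOrder j
  have hi2 : f (X.black (i + 1)) < c :=
    hlt _ (Ne.symm hji'') fun h => hji' (add_right_cancel h).symm
  have hle : ∀ m, f.toAffineMap (X.boundaryBasis i m) ≤ c := by
    intro m
    fin_cases m
    · rcases eq_or_ne (i - 1) (j + 1) with h | h
      · exact (congrArg (f ∘ X.black) h).trans hfj' |>.le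
      · exact (hlt _ (Ne.symm hji) h).le
    · exact (hlt _ (Ne.symm hji') fun h => hji (eq_sub_of_add_eq h.symm)).le
    · exact hi2.le
  have hcoord : ∀ m, 0 ≤ (X.boundaryBasis i).coord m (X.black j) := by
    intro m
    fin_cases m
    exacts [(X.coord_zero_boundaryBasis_pos hji' hji'').le, hnonneg,
      (X.coord_two_boundaryBasis_pos hji hji').le]
  exact ((X.boundaryBasis i).apply_lt_of_coord_nonneg f.toAffineMap hle hcoord 2 hi2
    (X.coord_two_boundaryBasis_pos hji hji')).ne hfj

theorem coord_one_boundaryBasis_nonpos (hji : j ≠ i) :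
    (X.boundaryBasis i).coord 1 (X.black j) ≤ 0 := by
  rcases eq_or_ne j (i - 1) with rfl | hji'
  · exact ((X.boundaryBasis i).coord_apply_ne (i := 1) (j := 0) (by decide)).le
  rcases eq_or_ne j (i + 1) with rfl | hji''
  · exact ((X.boundaryBasis i).coord_apply_ne (i := 1) (j := 2) (by decide)).le
  exact (X.coord_one_boundaryBasis_neg hji' hji hji'').le

end TDiagram

/-- Remark 3.3: if a white point `B` of a t-diagram lies inside the boundary triangle
`A_{i-1} A_i A_{i+1}`, then `B` lies inside a triangle with black vertices only if one
of that triangle's vertices is `A_i`. -/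
theorem stmt8 (d : ℕ) (X : TDiagram d) (i : Fin (d + 3)) (w : Fin (d + 1))
    (hw : X.white w ∈ X.bTri i) :
    ∀ p q r : Fin (d + 3), p ≠ q → p ≠ r → q ≠ r →
      X.white w ∈ interior (convexHull ℝ {X.black p, X.black q, X.black r}) →
      p = i ∨ q = i ∨ r = i := by
  intro p q r _ _ _ hmem
  by_contra! ⟨hp, hq, hr⟩
  have hpos : 0 < (X.boundaryBasis i).coord 1 (X.white w) := (X.bTri_eq_setOf_coord_pos i ▸ hw) 1
  have hsub : convexHull ℝ {X.black p, X.black q, X.black r} ⊆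
      (X.boundaryBasis i).coord 1 ⁻¹' Set.Iic 0 := by
    refine convexHull_min ?_ ((convex_Iic 0).affine_preimage _)
    rintro x (rfl | rfl | rfl)
    exacts [X.coord_one_boundaryBasis_nonpos hp, X.coord_one_boundaryBasis_nonpos hq,
      X.coord_one_boundaryBasis_nonpos hr]
  exact (hsub (interior_subset hmem)).not_gt hpos
end
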